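/- Let U ∈ ℝ_max^{m×n}, b ∈ ℝ_max^m, V ∈ ℝ_max^{m×n}, d ∈ ℝ_max^m, and let σ : {1,…,m} → {1,…,n+1} be such that v_{i,σ(i)} ∈ ℝ whenever σ(i) ≤ n and d_i ∈ ℝ whenever σ(i) = n+1. Put J = { j ≤ n : σ(i) = j for some i } and I_j = { i : σ(i) = j } for j ∈ J ∪ {n+1}. Then for every x ∈ ℝ^n the system [ for each i with σ(i) = j ≤ n: max( max_k (u_{ik} + x_k), b_i ) ≤ v_{ij} + x_j; and for each i with σ(i) = n+1: max( max_k (u_{ik} + x_k), b_i ) ≤ d_i ] holds if and only if: (a) for every j ∈ J: max_k ( max_{i ∈ I_j} (u_{ik} − v_{ij}) + x_k ) ≤ x_j and max_{i ∈ I_j} (b_i − v_{ij}) ≤ x_j; (b) for every k: x_k ≤ min_{i ∈ I_{n+1}} (d_i − u_{ik}); and (c) for every i ∈ I_{n+1}: b_i ≤ d_i. Here terms with u_{ik} = −∞ or b_i = −∞ are −∞, maxima over empty sets are −∞, d_i − u_{ik} = +∞ when u_{ik} = −∞, and minima over empty sets are +∞. (Thus the system U ⊗ x ⊕ b ≤ V^σ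 ⊗ x ⊕ d^σ is equivalent to one of the form R ⊗ x ≤ x, l ≤ x ≤ u.) -/

import Mathlib

/-! Every inequality of the system has a maximum on the left, so it splits into one inequality
per term. In a row with `σ i = j` the right-hand side `v_{ij} + x_j` is not `−∞`, so it can be
moved across: `u_{ik} + x_k ≤ v_{ij} + x_j` becomes `u_{ik} − v_{ij} + x_k ≤ x_j`, and
`b_i ≤ v_{ij} + x_j` becomes `b_i − v_{ij} ≤ x_j`. In a row with `σ i = n+1` the bound `d_i` is
real, so `u_{ik} + x_k ≤ d_i` becomes `x_k ≤ d_i − u_{ik}`. Grouping the rows by the value of `σ`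
collects these families into the maxima and minima of the reduced system. -/

namespace EReal

theorem add_coe_le_iff_le_sub {a b : EReal} {r : ℝ} : a + r ≤ b ↔ a ≤ b - r :=
  (le_sub_iff_add_le (.inl (coe_ne_bot r)) (.inl (coe_ne_top r))).symm

theorem sub_le_coe_iff {a v : EReal} {s : ℝ} (hv : v ≠ ⊥) : a - v ≤ s ↔ a ≤ v + s := by
  rw [sub_le_iff_le_add (.inl hv) (.inr (coe_ne_bot s)), add_comm]

theorem sub_le_coe_sub_coe_iff {a v : EReal} {r s : ℝ} (hv : v ≠ ⊥) :
    a - v ≤ (s : EReal) - r ↔ a + r ≤ v + s := by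
  rw [← coe_sub, sub_le_coe_iff hv, add_coe_le_iff_le_sub, coe_sub, sub_eq_add_neg,
    sub_eq_add_neg, add_assoc]

theorem coe_le_sub_iff {a d : EReal} {r : ℝ} (hd : d ≠ ⊥) (hd' : d ≠ ⊤) :
    (r : EReal) ≤ d - a ↔ a + r ≤ d := by
  rw [le_sub_iff_add_le (.inr hd) (.inr hd'), add_comm]

end EReal

theorem forall_fibers_sum_unit {ι α : Type*} (σ : ι → α ⊕ Unit) (P : ι → α ⊕ Unit → Prop) :
    (∀ i, P i (σ i)) ↔
      (∀ a i, σ i = Sum.inl a → P i (Sum.inl a)) ∧ ∀ i, σ i = Sum.inr () → P i (Sum.inr ()) := by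
  refine ⟨fun h => ⟨fun a i hi => hi ▸ h i, fun i hi => hi ▸ h i⟩, fun ⟨hl, hr⟩ i => ?_⟩
  rcases hσ : σ i with a | ⟨⟩
  exacts [hl a i hσ, hr i hσ]

open EReal in
theorem forall_iSup_add_sup_le_add_coe_iff {ι κ : Type*} (p : ι → Prop) (U : ι → κ → EReal)
    (b v : ι → EReal) (x : κ → ℝ) (s : ℝ) (hv : ∀ i, p i → v i ≠ ⊥) :
    (∀ i, p i → (⨆ k, U i k + (x k : EReal)) ⊔ b i ≤ v i + s) ↔
      (⨆ k, (⨆ (i) (_ : p i), U i k - v i) + (x k : EReal)) ≤ s ∧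
        (⨆ (i) (_ : p i), b i - v i) ≤ s := by
  simp only [sup_le_iff, iSup_le_iff, add_coe_le_iff_le_sub (b := (s : EReal))]
  exact ⟨fun h => ⟨fun k i hi => (sub_le_coe_sub_coe_iff (hv i hi)).2 ((h i hi).1 k),
      fun i hi => (sub_le_coe_iff (hv i hi)).2 (h i hi).2⟩,
    fun ⟨hU, hb⟩ i hi => ⟨fun k => (sub_le_coe_sub_coe_iff (hv i hi)).1 (hU k i hi),
      (sub_le_coe_iff (hv i hi)).1 (hb i hi)⟩⟩

open EReal in
theorem forall_iSup_add_sup_le_iff {ι κ : Type*} (p : ι → Prop) (U : ι → κ → EReal)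
    (b d : ι → EReal) (x : κ → ℝ) (hd : ∀ i, p i → d i ≠ ⊥ ∧ d i ≠ ⊤) :
    (∀ i, p i → (⨆ k, U i k + (x k : EReal)) ⊔ b i ≤ d i) ↔
      (∀ k, (x k : EReal) ≤ ⨅ (i) (_ : p i), d i - U i k) ∧ ∀ i, p i → b i ≤ d i := by
  simp only [sup_le_iff, iSup_le_iff, le_iInf_iff]
  exact ⟨fun h => ⟨fun k i hi => (coe_le_sub_iff (hd i hi).1 (hd i hi).2).2 ((h i hi).1 k),
      fun i hi => (h i hi).2⟩,
    fun ⟨hU, hb⟩ i hi => ⟨fun k => (coe_le_sub_iff (hd i hi).1 (hd i hi).2).1 (hU k i hi),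
      hb i hi⟩⟩

theorem stmt14 (m n : ℕ) (U V : Fin m → Fin n → EReal) (b d : Fin m → EReal)
    (σ : Fin m → Fin n ⊕ Unit)
    (hd : ∀ i, d i ≠ ⊤)
    (hVσ : ∀ i j, σ i = Sum.inl j → V i j ≠ ⊥)
    (hdσ : ∀ i, σ i = Sum.inr () → d i ≠ ⊥) :
    ∀ x : Fin n → ℝ,
      (∀ i, ((⨆ k, U i k + (x k : EReal)) ⊔ b i) ≤
          (match σ i with
           | Sum.inl j => V i j + (x j : EReal)
           | Sum.inr _ => d i)) ↔
      ((∀ j, (∃ i, σ i = Sum.inl j) →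
          ((⨆ k, ((⨆ (i) (_ : σ i = Sum.inl j), (U i k - V i j)) + (x k : EReal)))
              ≤ (x j : EReal) ∧
           (⨆ (i) (_ : σ i = Sum.inl j), (b i - V i j)) ≤ (x j : EReal))) ∧
       (∀ k, (x k : EReal) ≤ ⨅ (i) (_ : σ i = Sum.inr ()), (d i - U i k)) ∧
       (∀ i, σ i = Sum.inr () → b i ≤ d i)) := by
  intro x
  refine (forall_fibers_sum_unit σ fun i s => (⨆ k, U i k + (x k : EReal)) ⊔ b i ≤
      match s with
      | Sum.inl j => V i j + (x j : EReal)
      | Sum.inr _ => d i).trans (and_congr (forall_congr' fun j => ?_) ?_)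
  · have hj := forall_iSup_add_sup_le_add_coe_iff (fun i => σ i = Sum.inl j) U b (V · j) x (x j)
      fun i hi => hVσ i j hi
    exact ⟨fun h _ => hj.1 h, fun h i hi => hj.2 (h ⟨i, hi⟩) i hi⟩
  · exact forall_iSup_add_sup_le_iff _ U b d x fun i hi => ⟨hdσ i hi, hd i⟩
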